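/- arXiv:1101.3455 — 2 statements merged into one kernel-verified Lean document; each statement's English description precedes it below -/
import Mathlib

section
/- The q-Vandermonde identity holds: for nonnegative integers x, y, k, C_q(x+y, k) = ∑_{i=0}^{k} q^{(x−i)(k−i)} C_q(x,i) C_q(y,k−i), and equivalently C_q(x+y, k) = ∑_{i=0}^{k} q^{i(y−k+i)} C_q(x,i) C_q(y,k−i). -/
/-- The Gaussian binomial coefficient `C_q(a,k)`, extended to integer arguments,
with value `0` when `k < 0`. -/
noncomputable def gbinom (q : ℝ) (a k : ℤ) : ℝ :=
  if k < 0 then 0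
  else ∏ i ∈ Finset.range k.toNat, (q ^ (a - k + i + 1) - 1) / (q ^ ((i : ℤ) + 1) - 1)

section aux
variable {q : ℝ} (hq : 1 < q)
include hq

private lemma hq0 : q ≠ 0 := by nlinarith

private lemma gbinom_neg (n k : ℤ) (hk : k < 0) : gbinom q n k = 0 := by
  simp [gbinom, hk]

private lemma den_ne (i : ℕ) : q ^ ((i : ℤ) + 1) - 1 ≠ 0 := by
  have : (1:ℝ) < q ^ ((i : ℤ) + 1) := one_lt_zpow₀ hq (by positivity)
  linarith

private lemma gbinom_eq (n : ℤ) (k : ℕ) :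
    gbinom q n k =
      (∏ i ∈ Finset.range k, (q ^ (n - k + i + 1) - 1)) /
        (∏ i ∈ Finset.range k, (q ^ ((i : ℤ) + 1) - 1)) := by
  rw [gbinom, if_neg (by simp), Int.toNat_natCast, Finset.prod_div_distrib]

private lemma D_ne (k : ℕ) : (∏ i ∈ Finset.range k, (q ^ ((i : ℤ) + 1) - 1)) ≠ 0 :=
  Finset.prod_ne_zero_iff.2 fun i _ => den_ne hq i

private lemma gbinom_zero_right (n : ℤ) : gbinom q n 0 = 1 := by
  rw [show (0:ℤ) = ((0:ℕ):ℤ) by norm_num, gbinom_eq hq]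
  simp

private lemma gbinom_succ (n : ℤ) (j : ℕ) :
    gbinom q n (j + 1) =
      (q ^ (n - j) - 1) * (∏ i ∈ Finset.range j, (q ^ (n - j + i + 1) - 1)) /
        ((∏ i ∈ Finset.range j, (q ^ ((i : ℤ) + 1) - 1)) * (q ^ ((j : ℤ) + 1) - 1)) := by
  rw [show ((j:ℤ) + 1) = (((j+1:ℕ)):ℤ) by push_cast; ring, gbinom_eq hq]
  congr 1
  · rw [Finset.prod_range_succ' (fun i => (q ^ (n - ((j+1:ℕ):ℤ) + i + 1) - 1)) j, mul_comm]
    congr 1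
    · congr 1; push_cast; ring
    · apply Finset.prod_congr rfl; intro i _; congr 2; push_cast; ring
  · rw [Finset.prod_range_succ]; norm_cast

private lemma gbinom_succ' (n : ℤ) (j : ℕ) :
    gbinom q (n + 1) (j + 1) =
      (∏ i ∈ Finset.range j, (q ^ (n - j + i + 1) - 1)) * (q ^ (n + 1) - 1) /
        ((∏ i ∈ Finset.range j, (q ^ ((i : ℤ) + 1) - 1)) * (q ^ ((j : ℤ) + 1) - 1)) := by
  rw [show ((j:ℤ) + 1) = (((j+1:ℕ)):ℤ) by push_cast; ring, gbinom_eq hq]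
  congr 1
  · rw [Finset.prod_range_succ]
    congr 1
    · apply Finset.prod_congr rfl; intro i _; congr 2; push_cast; ring
    · congr 1; push_cast; ring
  · rw [Finset.prod_range_succ]; norm_cast

/-- Pascal recurrence A: `C(n+1, m) = C(n, m-1) + q^m C(n, m)`. -/
private lemma pascalA (n : ℤ) (m : ℕ) :
    gbinom q (n + 1) m = gbinom q n ((m : ℤ) - 1) + q ^ (m : ℤ) * gbinom q n m := by
  cases m with
  | zero => simp [gbinom_zero_right hq, gbinom, show ((0:ℕ):ℤ) - 1 < 0 by norm_num]
  | succ j =>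
    have h1 : ((j:ℤ) + 1) - 1 = ((j:ℕ):ℤ) := by push_cast; ring
    rw [show (((j+1:ℕ)):ℤ) = (j:ℤ)+1 by push_cast; ring, h1,
      gbinom_succ' hq, gbinom_succ hq, gbinom_eq hq,
      show n + 1 = (n - j) + ((j:ℤ) + 1) by ring, zpow_add₀ (hq0 hq)]
    have hD := D_ne hq j
    have hd := den_ne hq j
    field_simp
    ring

/-- Pascal recurrence B: `C(n+1, m) = q^(n+1-m) C(n, m-1) + C(n, m)`. -/
private lemma pascalB (n : ℤ) (m : ℕ) :
    gbinom q (n + 1) m = q ^ (n + 1 - m) * gbinom q n ((m : ℤ) - 1) + gbinom q n m := by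
  cases m with
  | zero => simp [gbinom_zero_right hq, gbinom, show ((0:ℕ):ℤ) - 1 < 0 by norm_num]
  | succ j =>
    have h1 : ((j:ℤ) + 1) - 1 = ((j:ℕ):ℤ) := by push_cast; ring
    rw [show (((j+1:ℕ)):ℤ) = (j:ℤ)+1 by push_cast; ring, h1,
      gbinom_succ' hq, gbinom_succ hq, gbinom_eq hq,
      show n + 1 - ((j:ℤ)+1) = n - j by ring,
      show n + 1 = (n - j) + ((j:ℤ) + 1) by ring, zpow_add₀ (hq0 hq)]
    have hD := D_ne hq j
    have hd := den_ne hq j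
    field_simp
    ring

/-- `C(n, k) = 0` for naturals `n < k`. -/
private lemma gbinom_lt (n k : ℕ) (h : n < k) : gbinom q (n:ℤ) k = 0 := by
  rw [gbinom_eq hq]
  apply div_eq_zero_iff.2
  left
  apply Finset.prod_eq_zero (Finset.mem_range.2 (show k - n - 1 < k by omega))
  have : (n:ℤ) - k + ((k - n - 1 : ℕ):ℤ) + 1 = 0 := by
    have : ((k - n - 1 : ℕ):ℤ) = (k:ℤ) - n - 1 := by push_cast [h.le]; omega
    omega
  rw [this]
  simp

private lemma vander (x : ℕ) : ∀ (y k : ℕ),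
    gbinom q ((x : ℤ) + y) k =
      ∑ i ∈ Finset.range (k + 1),
        q ^ (((x : ℤ) - i) * ((k : ℤ) - i)) * gbinom q x i * gbinom q y ((k : ℤ) - i) := by
  induction x with
  | zero =>
    intro y k
    rw [Finset.sum_eq_single_of_mem 0 (Finset.mem_range.2 (by omega))]
    · simp [gbinom_zero_right hq]
    · intro i _ hi
      rw [show ((0:ℕ):ℤ) = ((0:ℕ):ℤ) from rfl, gbinom_lt hq 0 i (by omega)]
      ring
  | succ x ih =>
    intro y k
    have key : ∀ i ∈ Finset.range (k + 1),
        q ^ ((((x:ℤ)+1) - i) * ((k : ℤ) - i)) * gbinom q (x+1) i * gbinom q y ((k : ℤ) - i)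
        = q ^ ((((x:ℤ)+1) - i) * ((k : ℤ) - i) + (((x:ℤ)+1) - i)) *
            gbinom q x ((i:ℤ) - 1) * gbinom q y ((k : ℤ) - i)
          + q ^ (((x:ℤ) - i) * ((k : ℤ) - i) + ((k:ℤ) - i)) *
            gbinom q x i * gbinom q y ((k : ℤ) - i) := by
      intro i _
      rw [pascalB hq x i,
        zpow_add₀ (hq0 hq) ((((x:ℤ)+1) - i) * ((k : ℤ) - i)) (((x:ℤ)+1) - i),
        zpow_add₀ (hq0 hq) (((x:ℤ) - i) * ((k : ℤ) - i)) ((k:ℤ) - i),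
        show (((x:ℤ)+1) - i) * ((k : ℤ) - i) = ((x:ℤ) - i) * ((k : ℤ) - i) + ((k:ℤ) - i)
          by ring,
        zpow_add₀ (hq0 hq) (((x:ℤ) - i) * ((k : ℤ) - i)) ((k:ℤ) - i),
        show (x:ℤ) + 1 - i = (x:ℤ) + 1 - i from rfl]
      ring
    have z1 : gbinom q (x:ℤ) (((0:ℕ):ℤ) - 1) = 0 := gbinom_neg hq _ _ (by norm_num)
    have z2 : gbinom q (y:ℤ) ((k:ℤ) - (k:ℕ) - 1) = 0 := gbinom_neg hq _ _ (by omega)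
    have S1 : ∑ i ∈ Finset.range (k + 1),
          q ^ ((((x:ℤ)+1) - i) * ((k : ℤ) - i) + (((x:ℤ)+1) - i)) *
            gbinom q x ((i:ℤ) - 1) * gbinom q y ((k : ℤ) - i)
        = ∑ i ∈ Finset.range (k + 1),
          q ^ (((x:ℤ) - i) * ((k : ℤ) - i)) * gbinom q x i * gbinom q y ((k : ℤ) - i - 1) := by
      rw [Finset.sum_range_succ' _ k, Finset.sum_range_succ _ k]
      congr 1
      · apply Finset.sum_congr rfl
        intro i _
        push_cast
        rw [show ((x:ℤ)+1-((i:ℤ)+1)) * ((k:ℤ)-((i:ℤ)+1)) + ((x:ℤ)+1-((i:ℤ)+1))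
              = ((x:ℤ)-i)*((k:ℤ)-i) by ring,
          show (i:ℤ)+1-1 = (i:ℤ) by ring,
          show (k:ℤ)-((i:ℤ)+1) = (k:ℤ)-i-1 by ring]
      · rw [z1, z2]; ring
    have main : ∑ i ∈ Finset.range (k + 1),
          q ^ ((((x:ℤ)+1) - i) * ((k : ℤ) - i)) * gbinom q ((x:ℤ)+1) i *
            gbinom q y ((k : ℤ) - i)
        = ∑ i ∈ Finset.range (k + 1),
          q ^ (((x:ℤ) - i) * ((k : ℤ) - i)) * gbinom q x i *
            gbinom q ((y:ℤ)+1) ((k : ℤ) - i) := by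
      rw [Finset.sum_congr rfl key, Finset.sum_add_distrib, S1, ← Finset.sum_add_distrib]
      apply Finset.sum_congr rfl
      intro i hi
      have hik : i ≤ k := Nat.lt_succ_iff.mp (Finset.mem_range.mp hi)
      have hm : ((k - i : ℕ):ℤ) = (k:ℤ) - i := by omega
      have hp : gbinom q ((y:ℤ)+1) ((k:ℤ)-i)
          = gbinom q y ((k:ℤ)-i-1) + q^((k:ℤ)-i) * gbinom q y ((k:ℤ)-i) := by
        have h := pascalA hq y (k-i)
        rw [hm] at h
        exact h
      rw [hp, zpow_add₀ (hq0 hq) (((x:ℤ) - i) * ((k : ℤ) - i)) ((k:ℤ)-i)]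
      ring
    push_cast
    rw [main, show (x:ℤ) + 1 + y = (x:ℤ) + ((y:ℤ)+1) by ring]
    have ihy := ih (y+1) k
    push_cast at ihy
    rw [ihy]

end aux

theorem stmt8 (q : ℝ) (hq : 1 < q) (x y k : ℕ) :
    (gbinom q ((x : ℤ) + y) k =
        ∑ i ∈ Finset.range (k + 1),
          q ^ (((x : ℤ) - i) * ((k : ℤ) - i)) * gbinom q x i * gbinom q y ((k : ℤ) - i)) ∧
      gbinom q ((x : ℤ) + y) k =
        ∑ i ∈ Finset.range (k + 1),
          q ^ ((i : ℤ) * ((y : ℤ) - k + i)) * gbinom q x i * gbinom q y ((k : ℤ) - i) := by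
  constructor
  · exact vander hq x y k
  · rw [show (x:ℤ) + y = (y:ℤ) + x by ring, vander hq y x k,
      ← Finset.sum_range_reflect
        (fun i => q ^ (((y:ℤ) - i) * ((k:ℤ) - i)) * gbinom q y i * gbinom q x ((k:ℤ) - i))
        (k+1)]
    apply Finset.sum_congr rfl
    intro i hi
    have hik : i ≤ k := Nat.lt_succ_iff.mp (Finset.mem_range.mp hi)
    have e1 : k + 1 - 1 - i = k - i := by omega
    have c1 : ((k - i : ℕ):ℤ) = (k:ℤ) - i := by omega
    simp only [e1, c1]
    rw [show (k:ℤ) - ((k:ℤ) - i) = (i:ℤ) by ring,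
      show ((y:ℤ) - ((k:ℤ) - i)) * (i:ℤ) = (i:ℤ) * ((y:ℤ) - k + i) by ring]
    ring
end

section
/- For nonnegative integers k, r, t, x with t ≤ r, the identity C_q(x,t)·C_q(k−x, r−t) = ∑_{i=t}^{r} (−1)^{i−t} q^{−(r−t)(x−t)+binom(i−t,2)} C_q(i,t) C_q(k−i, r−i) C_q(x,i) holds. -/
/-!
Writing `i = t + j`, the identity `C_q(x, t + j) C_q(t + j, t) = C_q(x, t) C_q(x - t, j)` pulls
`C_q(x, t)` out of the sum, and what is left is the alternating q-Vandermonde identity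
`∑ j, (-1)^j q^binom(j,2) C_q(y, j) C_q(n - j, m - j) = q^(m y) C_q(n - y, m)`
with `y = x - t`, `m = r - t`, `n = k - t`. It follows by induction on `y` from the two
q-Pascal rules, which are one-line consequences of
`C_q(a, k) = (q^a - 1) ⋯ (q^(a-k+1) - 1) / ((q - 1) ⋯ (q^k - 1))`.
-/

open Finset

noncomputable def qDescFactorial (q : ℝ) (a : ℤ) (k : ℕ) : ℝ :=
  ∏ i ∈ range k, (q ^ (a - k + i + 1) - 1)

noncomputable def qFactorial (q : ℝ) (k : ℕ) : ℝ := qDescFactorial q k k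

section
variable {q : ℝ}

lemma qDescFactorial_add (a : ℤ) (m n : ℕ) :
    qDescFactorial q a (m + n) = qDescFactorial q a m * qDescFactorial q (a - m) n := by
  rw [qDescFactorial, add_comm m n, prod_range_add, mul_comm, qDescFactorial, qDescFactorial]
  congr 1 <;> refine prod_congr rfl fun i _ => ?_ <;> push_cast <;> ring_nf

lemma qDescFactorial_one (a : ℤ) : qDescFactorial q a 1 = q ^ a - 1 := by
  simp [qDescFactorial]

lemma qDescFactorial_succ (a : ℤ) (k : ℕ) :
    qDescFactorial q a (k + 1) = qDescFactorial q a k * (q ^ (a - k) - 1) := by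
  rw [qDescFactorial_add, qDescFactorial_one]

lemma qDescFactorial_succ' (a : ℤ) (k : ℕ) :
    qDescFactorial q a (k + 1) = (q ^ a - 1) * qDescFactorial q (a - 1) k := by
  rw [add_comm, qDescFactorial_add, qDescFactorial_one, Nat.cast_one]

lemma qDescFactorial_eq_zero {a k : ℕ} (h : a < k) : qDescFactorial q a k = 0 :=
  prod_eq_zero (i := k - 1 - a) (mem_range.2 (by omega)) (by
    rw [show (a : ℤ) - k + (k - 1 - a : ℕ) + 1 = 0 by omega, zpow_zero, sub_self])

lemma qFactorial_succ (k : ℕ) :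
    qFactorial q (k + 1) = (q ^ ((k : ℤ) + 1) - 1) * qFactorial q k := by
  rw [qFactorial, add_comm, qDescFactorial_add, qDescFactorial_one, qFactorial]
  push_cast; ring_nf

lemma qDescFactorial_ne_zero (hq : 1 < q) {a : ℤ} {k : ℕ} (h : k ≤ a) :
    qDescFactorial q a k ≠ 0 :=
  prod_ne_zero_iff.2 fun i _ => sub_ne_zero.2 (one_lt_zpow₀ hq (by omega)).ne'

lemma qFactorial_ne_zero (hq : 1 < q) (k : ℕ) : qFactorial q k ≠ 0 :=
  qDescFactorial_ne_zero hq le_rfl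

lemma gbinom_of_neg (a : ℤ) {k : ℤ} (hk : k < 0) : gbinom q a k = 0 := if_pos hk

lemma gbinom_natCast (a : ℤ) (k : ℕ) :
    gbinom q a k = qDescFactorial q a k / qFactorial q k := by
  simp [gbinom, qDescFactorial, qFactorial, prod_div_distrib]

lemma gbinom_zero (a : ℤ) : gbinom q a 0 = 1 := by
  simpa [qDescFactorial, qFactorial] using gbinom_natCast (q := q) a 0

lemma gbinom_natCast_eq_zero {a k : ℕ} (h : a < k) : gbinom q a k = 0 := by
  rw [gbinom_natCast, qDescFactorial_eq_zero h, zero_div]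

lemma zpow_mul_zpow_of_add_eq (hq : q ≠ 0) {m n l : ℤ} (h : m + n = l) :
    q ^ m * q ^ n = q ^ l := by
  rw [← zpow_add₀ hq, h]

lemma gbinom_succ_succ (hq : 1 < q) (a : ℤ) (k : ℕ) :
    gbinom q (a + 1) (k + 1 : ℕ) =
      gbinom q a k + q ^ ((k : ℤ) + 1) * gbinom q a (k + 1 : ℕ) := by
  rw [gbinom_natCast, gbinom_natCast, gbinom_natCast, qDescFactorial_succ', add_sub_cancel_right,
    qDescFactorial_succ, qFactorial_succ]
  have hden : q ^ ((k : ℤ) + 1) - 1 ≠ 0 := sub_ne_zero.2 (one_lt_zpow₀ hq (by omega)).ne'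
  have hfac := qFactorial_ne_zero hq k
  field_simp
  linear_combination -qDescFactorial q a k *
    zpow_mul_zpow_of_add_eq (by positivity) (show (k : ℤ) + 1 + (a - k) = a + 1 by ring)

lemma gbinom_succ_succ' (hq : 1 < q) (a : ℤ) (k : ℕ) :
    gbinom q (a + 1) (k + 1 : ℕ) = gbinom q a (k + 1 : ℕ) + q ^ (a - k) * gbinom q a k := by
  rw [gbinom_natCast, gbinom_natCast, gbinom_natCast, qDescFactorial_succ', add_sub_cancel_right,
    qDescFactorial_succ, qFactorial_succ]
  have hden : q ^ ((k : ℤ) + 1) - 1 ≠ 0 := sub_ne_zero.2 (one_lt_zpow₀ hq (by omega)).ne'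
  have hfac := qFactorial_ne_zero hq k
  field_simp
  linear_combination -qDescFactorial q a k *
    zpow_mul_zpow_of_add_eq (by positivity) (show a - k + (k + 1) = a + 1 by ring)

lemma gbinom_succ_left (hq : 1 < q) (a : ℤ) (j : ℕ) :
    gbinom q (a + 1) j = gbinom q a j + q ^ (a + 1 - j) * gbinom q a (j - 1) := by
  cases j with
  | zero => simp [gbinom_zero, gbinom_of_neg]
  | succ k => rw [gbinom_succ_succ' hq]; push_cast; ring_nf

lemma gbinom_mul_gbinom (hq : 1 < q) (a : ℤ) (t j : ℕ) :
    gbinom q a (t + j : ℕ) * gbinom q (t + j : ℕ) t = gbinom q a t * gbinom q (a - t) j := by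
  have hsplit : qFactorial q (t + j) = qDescFactorial q (t + j : ℕ) t * qFactorial q j := by
    rw [qFactorial, qDescFactorial_add, qFactorial]; push_cast; ring_nf
  simp only [gbinom_natCast, qDescFactorial_add, hsplit]
  have := qFactorial_ne_zero hq t
  have := qFactorial_ne_zero hq j
  have := qDescFactorial_ne_zero (q := q) hq (a := (t + j : ℕ)) (k := t) (by omega)
  field_simp

end

noncomputable def altGbinomSum (q : ℝ) (y : ℤ) (m : ℕ) (n : ℤ) : ℝ :=
  ∑ j ∈ range (m + 1),
    (-1) ^ j * q ^ (j.choose 2 : ℤ) * gbinom q y j * gbinom q (n - j) (m - j)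

section
variable {q : ℝ}

lemma altGbinomSum_zero_right (y n : ℤ) : altGbinomSum q y 0 n = 1 := by
  simp [altGbinomSum, gbinom_zero]

lemma altGbinomSum_zero_left (m : ℕ) (n : ℤ) : altGbinomSum q 0 m n = gbinom q n m := by
  rw [altGbinomSum, sum_eq_single 0]
  · simp [gbinom_zero]
  · intro j _ hj
    rw [← Nat.cast_zero, gbinom_natCast_eq_zero (Nat.pos_of_ne_zero hj)]
    ring
  · simp

lemma altGbinomSum_succ (hq : 1 < q) (y : ℤ) (m : ℕ) (n : ℤ) :
    altGbinomSum q (y + 1) (m + 1) n =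
      altGbinomSum q y (m + 1) n - q ^ y * altGbinomSum q y m (n - 1) := by
  have hsplit : altGbinomSum q (y + 1) (m + 1) n = altGbinomSum q y (m + 1) n +
      ∑ j ∈ range (m + 2), (-1) ^ j * q ^ (j.choose 2 : ℤ) * q ^ (y + 1 - j) *
        gbinom q y (j - 1) * gbinom q (n - j) ((m + 1 : ℕ) - j) := by
    simp only [altGbinomSum, gbinom_succ_left hq, ← sum_add_distrib]
    exact sum_congr rfl fun j _ => by ring
  have hshift : ∑ j ∈ range (m + 2), (-1) ^ j * q ^ (j.choose 2 : ℤ) * q ^ (y + 1 - j) *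
      gbinom q y (j - 1) * gbinom q (n - j) ((m + 1 : ℕ) - j) =
        -q ^ y * altGbinomSum q y m (n - 1) := by
    rw [sum_range_succ', altGbinomSum, mul_sum]
    simp only [Nat.cast_zero, zero_sub, gbinom_of_neg y (show (-1 : ℤ) < 0 by norm_num),
      mul_zero, zero_mul, add_zero]
    refine sum_congr rfl fun j _ => ?_
    have hexp : q ^ ((j + 1).choose 2 : ℤ) * q ^ (y + 1 - (j + 1 : ℕ)) =
        q ^ (j.choose 2 : ℤ) * q ^ y := by
      rw [← zpow_add₀ (by positivity), ← zpow_add₀ (by positivity), Nat.choose_succ_succ',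
        Nat.choose_one_right]
      push_cast; ring_nf
    push_cast at hexp ⊢
    rw [add_sub_cancel_right, show n - ((j : ℤ) + 1) = n - 1 - j by ring,
      show (m : ℤ) + 1 - ((j : ℤ) + 1) = m - j by ring, pow_succ]
    linear_combination -(-1) ^ j * gbinom q y j * gbinom q (n - 1 - j) (m - j) * hexp
  rw [hsplit, hshift]; ring

lemma altGbinomSum_eq (hq : 1 < q) (y m : ℕ) (n : ℤ) :
    altGbinomSum q y m n = q ^ ((m : ℤ) * y) * gbinom q (n - y) m := by
  induction y generalizing m n with
  | zero => simp [altGbinomSum_zero_left]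
  | succ y ih =>
    cases m with
    | zero => simp [altGbinomSum_zero_right, gbinom_zero]
    | succ m =>
      have hpascal := gbinom_succ_succ hq (n - y - 1) m
      rw [sub_add_cancel] at hpascal
      have hexp : q ^ (y : ℤ) * q ^ ((m : ℤ) * y) = q ^ (((m + 1 : ℕ) : ℤ) * y) :=
        zpow_mul_zpow_of_add_eq (by positivity) (by push_cast; ring)
      have hexp' : q ^ (((m + 1 : ℕ) : ℤ) * y) * q ^ ((m : ℤ) + 1) =
          q ^ (((m + 1 : ℕ) : ℤ) * (y + 1 : ℕ)) :=
        zpow_mul_zpow_of_add_eq (by positivity) (by push_cast; ring)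
      push_cast at hexp hexp' ⊢
      rw [altGbinomSum_succ hq, ih, ih]
      push_cast at hpascal ⊢
      rw [sub_sub n 1, add_comm 1, ← sub_sub, hpascal, ← hexp', ← hexp]
      ring

end

theorem stmt12 (q : ℝ) (hq : 1 < q) (k r t x : ℕ) (htr : t ≤ r) :
    gbinom q x t * gbinom q ((k : ℤ) - x) ((r : ℤ) - t) =
      ∑ i ∈ Finset.Icc t r,
        (-1 : ℝ) ^ (i - t) *
          q ^ (-(((r : ℤ) - t) * ((x : ℤ) - t)) + ((i - t).choose 2 : ℤ)) *
          gbinom q i t * gbinom q ((k : ℤ) - i) ((r : ℤ) - i) * gbinom q x i := by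
  rcases lt_or_ge x t with hxt | htx
  · rw [gbinom_natCast_eq_zero hxt, zero_mul]
    refine (sum_eq_zero fun i hi => ?_).symm
    rw [gbinom_natCast_eq_zero (hxt.trans_le (mem_Icc.1 hi).1), mul_zero]
  obtain ⟨y, rfl⟩ := Nat.exists_eq_add_of_le htx
  obtain ⟨m, rfl⟩ := Nat.exists_eq_add_of_le htr
  rw [← Ico_add_one_right_eq_Icc, sum_Ico_eq_sum_range, add_assoc, Nat.add_sub_cancel_left]
  symm
  calc _ = ∑ j ∈ range (m + 1), gbinom q (t + y : ℕ) t * (q ^ (-((m : ℤ) * y)) *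
          ((-1) ^ j * q ^ (j.choose 2 : ℤ) * gbinom q y j * gbinom q (k - t - j) (m - j))) := by
        refine sum_congr rfl fun j _ => ?_
        have htri := gbinom_mul_gbinom hq (t + y : ℕ) t j
        rw [Nat.add_sub_cancel_left, zpow_add₀ (by positivity)]
        push_cast at htri ⊢
        rw [add_sub_cancel_left] at htri
        simp only [add_sub_cancel_left, sub_add_eq_sub_sub]
        linear_combination (-1) ^ j * q ^ (-((m : ℤ) * y)) * q ^ (j.choose 2 : ℤ) *
          gbinom q (k - t - j) (m - j) * htri
    _ = gbinom q (t + y : ℕ) t * (q ^ (-((m : ℤ) * y)) * altGbinomSum q y m (k - t)) := by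
        rw [altGbinomSum, mul_sum, mul_sum]
    _ = _ := by
        push_cast
        rw [altGbinomSum_eq hq, ← mul_assoc (q ^ _), ← zpow_add₀ (by positivity),
          neg_add_cancel, zpow_zero, one_mul, add_sub_cancel_left, sub_add_eq_sub_sub]
end
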